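/- For any graph H, if χ'(H) = Δ(H) = t, then H contains a set of t distinct edges and a semi-edge-disjoint collection of paths containing a path between each pair of these edges; equivalently, L(H) has a K_t-immersion. -/

import Mathlib

/-- A multigraph: a type of vertices, a type of edges, an endpoints map,
and no loops. Parallel edges are allowed. -/
structure MG : Type 1 where
  V : Type
  E : Type
  ends : E → Sym2 V
  noLoop : ∀ e, ¬ (ends e).IsDiag

namespace MG

/-- Two vertices are adjacent if some edge joins them. -/
def Adjv (G : MG) (x y : G.V) : Prop := ∃ e, G.ends e = s(x, y)

/-- Isomorphism of multigraphs. -/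
def Iso (G H : MG) : Prop :=
  ∃ (fv : G.V ≃ H.V) (fe : G.E ≃ H.E), ∀ e, H.ends (fe e) = Sym2.map fv (G.ends e)

/-- `H` is (isomorphic to) a subgraph of `G`. -/
def IsSubgraphOf (H G : MG) : Prop :=
  ∃ (fv : H.V ↪ G.V) (fe : H.E ↪ G.E), ∀ e, G.ends (fe e) = Sym2.map fv (H.ends e)

/-- The multigraph obtained from `G` by deleting the edges `e₁, e₂` and adding a
new edge with endpoints `u, w`. -/
def splitOff (G : MG) (e₁ e₂ : G.E) (u w : G.V) (huw : u ≠ w) : MG where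
  V := G.V
  E := {e : G.E // e ≠ e₁ ∧ e ≠ e₂} ⊕ Unit
  ends := fun x => match x with
    | Sum.inl e => G.ends e.1
    | Sum.inr _ => s(u, w)
  noLoop := by
    rintro (e | e)
    · exact G.noLoop e.1
    · simpa [Sym2.mk_isDiag_iff] using huw

/-- `G'` is obtained from `G` by splitting off one pair of adjacent edges. -/
def SplitStep (G G' : MG) : Prop :=
  ∃ (e₁ e₂ : G.E) (u v w : G.V) (huw : u ≠ w),
    e₁ ≠ e₂ ∧ G.ends e₁ = s(u, v) ∧ G.ends e₂ = s(v, w) ∧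
      Iso G' (G.splitOff e₁ e₂ u w huw)

/-- `G` has an `H`-immersion: `H` can be obtained from a subgraph of `G` by
splitting off pairs of adjacent edges and removing isolated vertices. -/
def Immersion (G H : MG) : Prop :=
  ∃ G₀ G₁ : MG, G₀.IsSubgraphOf G ∧ Relation.ReflTransGen SplitStep G₀ G₁ ∧
    ∃ (fv : H.V ↪ G₁.V) (fe : H.E ≃ G₁.E),
      (∀ e, G₁.ends (fe e) = Sym2.map fv (H.ends e)) ∧
      ∀ v : G₁.V, v ∉ Set.range fv → ∀ e, v ∉ G₁.ends e

/-- A set of vertices induces a connected subgraph. -/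
def ConnIn (G : MG) (S : Set G.V) : Prop :=
  ∀ a ∈ S, ∀ b ∈ S, Relation.ReflTransGen (fun x y => x ∈ S ∧ y ∈ S ∧ G.Adjv x y) a b

/-- `G` has an `H`-minor (branch set formulation of contracting edges in a
subgraph of `G`). -/
def Minor (G H : MG) : Prop :=
  ∃ β : H.V → Set G.V,
    (∀ u, (β u).Nonempty) ∧ (∀ u, G.ConnIn (β u)) ∧
    (Pairwise fun u v => Disjoint (β u) (β v)) ∧
    ∃ η : H.E ↪ G.E, ∀ e u v, H.ends e = s(u, v) →
      ∃ a ∈ β u, ∃ b ∈ β v, G.ends (η e) = s(a, b)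

/-- `G` is a connected multigraph. -/
def Connected (G : MG) : Prop :=
  Nonempty G.V ∧ ∀ a b : G.V, Relation.ReflTransGen G.Adjv a b

/-- The degree of `v` is at least `k`. -/
def degGE (G : MG) (v : G.V) (k : ℕ) : Prop :=
  Nonempty (Fin k ↪ {e : G.E // v ∈ G.ends e})

/-- The line graph of a multigraph: a vertex for each edge, two vertices
adjacent iff the corresponding edges share an endpoint. -/
def lineGraph (G : MG) : SimpleGraph G.E where
  Adj e f := e ≠ f ∧ ∃ v, v ∈ G.ends e ∧ v ∈ G.ends f
  symm := by constructor; rintro e f ⟨h, v, h1, h2⟩; exact ⟨Ne.symm h, v, h2, h1⟩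
  loopless := by constructor; rintro e ⟨h, _⟩; exact h rfl

/-- `mG`: each edge of `G` is replaced by `m` parallel copies. -/
def mul (G : MG) (m : ℕ) : MG where
  V := G.V
  E := G.E × Fin m
  ends := fun p => G.ends p.1
  noLoop := fun p => G.noLoop p.1

/-- `G` has a proper edge colouring with `n` colours. -/
def EdgeColorable (G : MG) (n : ℕ) : Prop :=
  ∃ C : G.E → Fin n, ∀ e f, e ≠ f → (∃ v, v ∈ G.ends e ∧ v ∈ G.ends f) → C e ≠ C f

/-- The chromatic index of `G`. -/
noncomputable def chromIndex (G : MG) : ℕ := sInf {n | G.EdgeColorable n}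

/-- A path between edges: a nonempty sequence of distinct edges in which
consecutive edges are adjacent (this corresponds exactly to a path in the
line graph). -/
structure EPath (G : MG) where
  edges : List G.E
  ne : edges ≠ []
  nodup : edges.Nodup
  chain : edges.Chain' fun a b => ∃ v, v ∈ G.ends a ∧ v ∈ G.ends b

/-- First edge of an edge-path. -/
def EPath.firstE {G : MG} (P : EPath G) : G.E := P.edges.head P.ne

/-- Last edge of an edge-path. -/
def EPath.lastE {G : MG} (P : EPath G) : G.E := P.edges.getLast P.ne

/-- The (unordered) pair of edges `p` occurs consecutively in `P`; that is,
the corresponding 2-edge path is a subpath of `P`. -/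
def EPath.Adj2 {G : MG} (P : EPath G) (p : Sym2 G.E) : Prop :=
  ∃ l₁ a b l₂, P.edges = l₁ ++ a :: b :: l₂ ∧ p = s(a, b)

/-- A set of paths is semi-edge-disjoint: every 2-edge path is a subpath of at
most one path of the set. -/
def SED (G : MG) (S : Set (EPath G)) : Prop :=
  ∀ P ∈ S, ∀ Q ∈ S, ∀ p, P.Adj2 p → Q.Adj2 p → P = Q

/-- `H` contains `t` distinct edges and a path between each pair of them such
that this set of paths is semi-edge-disjoint. -/
def CliqueSED (H : MG) (t : ℕ) : Prop :=
  ∃ (f : Fin t ↪ H.E) (P : (i j : Fin t) → i < j → EPath H),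
    (∀ i j h, (P i j h).firstE = f i ∧ (P i j h).lastE = f j) ∧
    H.SED {Q | ∃ i j h, Q = P i j h}

/-- A path in a multigraph, recorded by its vertex sequence (without
repetitions) and edge sequence. -/
structure VPath (G : MG) where
  verts : List G.V
  edges : List G.E
  hlen : verts.length = edges.length + 1
  nodup : verts.Nodup
  hends : ∀ (i : ℕ) (h : i < edges.length),
    G.ends (edges.get ⟨i, h⟩) =
      s(verts.get ⟨i, by omega⟩, verts.get ⟨i + 1, by omega⟩)

/-- First vertex of a path. -/
def VPath.first {G : MG} (P : VPath G) : G.V :=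
  P.verts.head (by have h := P.hlen; intro hnil; rw [hnil] at h; simp at h)

/-- Last vertex of a path. -/
def VPath.last {G : MG} (P : VPath G) : G.V :=
  P.verts.getLast (by have h := P.hlen; intro hnil; rw [hnil] at h; simp at h)

/-- A cycle in a multigraph: distinct vertices `v 0, …, v (n-1)` and distinct
edges `e 0, …, e (n-1)` with `e i` joining `v i` to `v (i+1 mod n)`. -/
structure Cycle (G : MG) where
  n : ℕ
  hn : 2 ≤ n
  v : Fin n → G.V
  e : Fin n → G.E
  vinj : Function.Injective v
  einj : Function.Injective e
  hends : ∀ i : Fin n,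
    G.ends (e i) =
      s(v i, v ⟨(i.1 + 1) % n, Nat.mod_lt _ (Nat.lt_of_le_of_lt (Nat.zero_le _) i.isLt)⟩)

/-- `G` has a topological `H`-minor: branch vertices joined by internally
disjoint paths. -/
def TopMinor (G H : MG) : Prop :=
  ∃ (fv : H.V ↪ G.V) (P : H.E → VPath G),
    (∀ e, s((P e).first, (P e).last) = Sym2.map fv (H.ends e)) ∧
    (∀ e, ∀ x ∈ (P e).verts.tail.dropLast, x ∉ Set.range fv) ∧
    (∀ e f, e ≠ f → ∀ x, x ∈ (P e).verts → x ∈ (P f).verts → x ∈ Set.range fv) ∧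
    (∀ e f, e ≠ f → ∀ x ∈ (P e).edges, x ∉ (P f).edges)

/-- A set of edges spans a connected subgraph. -/
def ConnEdges (G : MG) (S : Set G.E) : Prop :=
  ∀ e ∈ S, ∀ f ∈ S,
    Relation.ReflTransGen (fun a b => a ∈ S ∧ b ∈ S ∧ ∃ v, v ∈ G.ends a ∧ v ∈ G.ends b) e f

end MG

/-- A simple graph regarded as a multigraph. -/
def SimpleGraph.toMG {V : Type} (G : SimpleGraph V) : MG where
  V := V
  E := G.edgeSet
  ends := fun e => e.1
  noLoop := fun e => G.not_isDiag_of_mem_edgeSet e.2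

/-- The complete graph `K_t` as a multigraph. -/
def completeMG (t : ℕ) : MG := (⊤ : SimpleGraph (Fin t)).toMG

/-!
The `t` edges at a vertex of degree `t` pairwise share that vertex, so they form a clique `K_t`
in the line graph. A clique yields both conclusions without splitting anything: join two clique
edges by the 2-edge path through both, whose only 2-edge subpath is the pair itself, and read the
clique as a `K_t` subgraph, which is in particular a `K_t`-immersion.
-/

namespace MG

def EPath.ofAdj {G : MG} {a b : G.E} (h : G.lineGraph.Adj a b) : EPath G where
  edges := [a, b]
  ne := List.cons_ne_nil _ _
  nodup := by simpa using h.1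
  chain := List.isChain_pair.mpr h.2

lemma EPath.adj2_ofAdj_iff {G : MG} {a b : G.E} (h : G.lineGraph.Adj a b) {p : Sym2 G.E} :
    (EPath.ofAdj h).Adj2 p ↔ p = s(a, b) := by
  refine ⟨?_, fun hp => ⟨[], a, b, [], rfl, hp⟩⟩
  rintro ⟨_ | ⟨c, l₁⟩, x, y, l₂, hab, rfl⟩
  · simp only [EPath.ofAdj, List.nil_append, List.cons.injEq] at hab
    rw [hab.1, hab.2.1]
  · have := congrArg List.length hab
    simp only [EPath.ofAdj, List.length_cons, List.length_nil, List.cons_append,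
      List.length_append] at this
    omega

lemma exists_topEmbedding_lineGraph_of_degGE {G : MG} {v : G.V} {t : ℕ} (hv : G.degGE v t) :
    Nonempty ((⊤ : SimpleGraph (Fin t)) ↪g G.lineGraph) := by
  obtain ⟨f⟩ := hv
  let g : Fin t ↪ G.E := f.trans (Function.Embedding.subtype _)
  refine ⟨⟨g, fun {i j} => ?_⟩⟩
  simp only [SimpleGraph.top_adj]
  exact ⟨fun h => g.injective.ne_iff.mp h.1, fun hij => ⟨g.injective.ne hij, v, (f i).2, (f j).2⟩⟩

lemma cliqueSED_of_topEmbedding {G : MG} {t : ℕ} (φ : (⊤ : SimpleGraph (Fin t)) ↪g G.lineGraph) :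
    G.CliqueSED t := by
  have hadj : ∀ i j : Fin t, i < j → G.lineGraph.Adj (φ i) (φ j) := fun i j h =>
    φ.map_adj_iff.mpr h.ne
  refine ⟨φ.toEmbedding, fun i j h => EPath.ofAdj (hadj i j h), fun _ _ _ => ⟨rfl, rfl⟩, ?_⟩
  rintro _ ⟨i, j, hij, rfl⟩ _ ⟨i', j', hij', rfl⟩ p hp hp'
  rw [EPath.adj2_ofAdj_iff] at hp hp'
  rcases Sym2.eq_iff.mp (hp.symm.trans hp') with ⟨hi, hj⟩ | ⟨hi, hj⟩
  · obtain rfl := φ.injective hi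
    obtain rfl := φ.injective hj
    rfl
  · obtain rfl := φ.injective hi
    obtain rfl := φ.injective hj
    exact (lt_asymm hij hij').elim

lemma IsSubgraphOf.immersion {G H : MG} (h : H.IsSubgraphOf G) : G.Immersion H :=
  ⟨H, H, h, .refl, .refl _, .refl _, fun _ => by simp,
    fun w hw _ _ => hw ⟨w, rfl⟩⟩

end MG

lemma SimpleGraph.Embedding.toMG_isSubgraphOf {V W : Type} {G : SimpleGraph V}
    {G' : SimpleGraph W} (φ : G ↪g G') : G.toMG.IsSubgraphOf G'.toMG :=
  ⟨φ.toEmbedding,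
    ⟨fun e => ⟨Sym2.map φ e.1, φ.map_mem_edgeSet_iff.mpr e.2⟩,
      fun _ _ h => Subtype.ext (Sym2.map.injective φ.injective (Subtype.ext_iff.mp h))⟩,
    fun _ => rfl⟩

theorem cliqueSED_of_chromIndex_eq_maxDegree_general (H : MG) (t : ℕ)
    (hdeg : ∃ v, H.degGE v t) :
    H.CliqueSED t ∧
      MG.Immersion (SimpleGraph.toMG H.lineGraph) (completeMG t) := by
  obtain ⟨v, hv⟩ := hdeg
  obtain ⟨φ⟩ := MG.exists_topEmbedding_lineGraph_of_degGE hv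
  exact ⟨MG.cliqueSED_of_topEmbedding φ, φ.toMG_isSubgraphOf.immersion⟩

/-- if `χ'(H) = Δ(H) = t` then `H` contains `t` distinct edges
with a semi-edge-disjoint collection of paths between each pair; equivalently,
`L(H)` has a `K_t`-immersion. -/
theorem cliqueSED_of_chromIndex_eq_maxDegree (H : MG) (t : ℕ)
    (hcol : H.EdgeColorable t) (hchi : ∀ n < t, ¬ H.EdgeColorable n)
    (hdeg : ∃ v, H.degGE v t) (hmax : ∀ v, ¬ H.degGE v (t + 1)) :
    H.CliqueSED t ∧
      MG.Immersion (SimpleGraph.toMG H.lineGraph) (completeMG t) :=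
  cliqueSED_of_chromIndex_eq_maxDegree_general H t hdeg
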